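/- arXiv:0710.4466 — 5 statements merged into one kernel-verified Lean document; each statement's English description precedes it below -/
import Mathlib

section
/- Let a₁,…,a_m ∈ ℝ, r₁,…,r_m ≥ 0, and let ᾱ ∈ ℝ^m satisfy |ᾱ_j − a_j| ≤ √(r_j) for all j. Let α*_j = sgn(a_j)(|a_j| − √(r_j))₊. Then for every subset S ⊆ {1,…,m}: Σ_{j=1}^m (α*_j − ᾱ_j)² ≤ Σ_{j∉S} ᾱ_j² + 4 Σ_{j∈S} r_j. -/
/-- Soft thresholding moves a by at most s. -/
lemma soft_close (a s : ℝ) (hs : 0 ≤ s) :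
    |Real.sign a * max (|a| - s) 0 - a| ≤ s := by
  rcases le_or_gt |a| s with h | h
  · have : max (|a| - s) 0 = 0 := max_eq_right (by linarith)
    rw [this, mul_zero, zero_sub, abs_neg]; exact h
  · have hmax : max (|a| - s) 0 = |a| - s := max_eq_left (by linarith)
    rw [hmax]
    rcases lt_trichotomy a 0 with ha | ha | ha
    · rw [Real.sign_of_neg ha, abs_of_neg ha]
      rw [show (-1 : ℝ) * (-a - s) - a = s by ring, abs_of_nonneg hs]
    · simp [ha] at h; linarith
    · rw [Real.sign_of_pos ha, abs_of_pos ha]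
      rw [show (1 : ℝ) * (a - s) - a = -s by ring, abs_neg, abs_of_nonneg hs]

lemma soft_small (a s b : ℝ) (hs : 0 ≤ s) (hb : |b - a| ≤ s) :
    |Real.sign a * max (|a| - s) 0 - b| ≤ |b| := by
  rcases le_or_gt |a| s with h | h
  · have : max (|a| - s) 0 = 0 := max_eq_right (by linarith)
    rw [this, mul_zero, zero_sub, abs_neg]
  · have hmax : max (|a| - s) 0 = |a| - s := max_eq_left (by linarith)
    rw [hmax]
    have hb' := abs_le.mp hb
    rcases lt_trichotomy a 0 with ha | ha | ha
    · rw [abs_of_neg ha] at h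
      rw [Real.sign_of_neg ha, abs_of_neg ha]
      have hb0 : b < 0 := by linarith [hb'.2]
      rw [abs_of_neg hb0, abs_le]
      constructor <;> [linarith [hb'.2]; linarith]
    · simp [ha] at h; linarith
    · rw [abs_of_pos ha] at h
      rw [Real.sign_of_pos ha, abs_of_pos ha]
      have hb0 : 0 < b := by linarith [hb'.1]
      rw [abs_of_pos hb0, abs_le]
      constructor <;> [linarith; linarith [hb'.1]]

/-- Deterministic core of the sparsity oracle inequality for the
soft-thresholding estimator under orthogonal design. -/
theorem stmt_6 {m : ℕ} (a r ᾱ : Fin m → ℝ) (hr : ∀ j, 0 ≤ r j)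
    (hfeas : ∀ j, |ᾱ j - a j| ≤ Real.sqrt (r j)) (S : Finset (Fin m)) :
    ∑ j, (Real.sign (a j) * max (|a j| - Real.sqrt (r j)) 0 - ᾱ j) ^ 2 ≤
      ∑ j ∈ Sᶜ, (ᾱ j) ^ 2 + 4 * ∑ j ∈ S, r j := by
  have hsplit : (Finset.univ : Finset (Fin m)) = Sᶜ ∪ S := by
    rw [Finset.union_comm, Finset.union_compl]
  rw [hsplit, Finset.sum_union disjoint_compl_left]
  rw [Finset.mul_sum]
  apply add_le_add
  · apply Finset.sum_le_sum
    intro j _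
    have h := soft_small (a j) (Real.sqrt (r j)) (ᾱ j) (Real.sqrt_nonneg _) (hfeas j)
    calc (Real.sign (a j) * max (|a j| - Real.sqrt (r j)) 0 - ᾱ j) ^ 2
        = |Real.sign (a j) * max (|a j| - Real.sqrt (r j)) 0 - ᾱ j| ^ 2 := (sq_abs _).symm
      _ ≤ |ᾱ j| ^ 2 := by gcongr
      _ = (ᾱ j) ^ 2 := sq_abs _
  · apply Finset.sum_le_sum
    intro j _
    have h1 := soft_close (a j) (Real.sqrt (r j)) (Real.sqrt_nonneg _)
    have h2 := hfeas j
    have h3 : |Real.sign (a j) * max (|a j| - Real.sqrt (r j)) 0 - ᾱ j|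
        ≤ 2 * Real.sqrt (r j) := by
      calc _ ≤ |Real.sign (a j) * max (|a j| - Real.sqrt (r j)) 0 - a j| + |a j - ᾱ j| :=
              abs_sub_le _ _ _
        _ ≤ Real.sqrt (r j) + Real.sqrt (r j) := by
            rw [abs_sub_comm (a j)]; exact add_le_add h1 h2
        _ = 2 * Real.sqrt (r j) := by ring
    calc (Real.sign (a j) * max (|a j| - Real.sqrt (r j)) 0 - ᾱ j) ^ 2
        = |Real.sign (a j) * max (|a j| - Real.sqrt (r j)) 0 - ᾱ j| ^ 2 := (sq_abs _).symm
      _ ≤ (2 * Real.sqrt (r j)) ^ 2 := by gcongr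
      _ = 4 * r j := by rw [mul_pow, Real.sq_sqrt (hr j)]; norm_num
end

section
/- Under an orthogonal dictionary with constants a_j, thresholds r_j ≤ k·L/n (for constants k, L, n > 0), suppose ᾱ ∈ ℝ^m is feasible (|ᾱ_j − a_j| ≤ √(r_j) for all j) and satisfies the regularity condition: for every j ∈ {1,…,m}, inf over subsets S of cardinality at most j of the tail Σ_{i∉S} ᾱ_i² ≤ C²·j^{−2β} for some C > 0, β > 0. Then the soft-thresholded estimator α* satisfies Σ_j (α*_j − ᾱ_j)² ≤ inf_{1 ≤ s ≤ m} [ C² s^{−2β} + 4 s k L / n ]. -/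
/-- Oracle inequality under the general regularity assumption: rate obtained by
optimizing the model size s. -/
theorem stmt_7 {m : ℕ} (a r ᾱ : Fin m → ℝ) (k L n C β : ℝ)
    (hk : 0 < k) (hL : 0 < L) (hn : 0 < n) (hC : 0 < C) (hβ : 0 < β)
    (hr0 : ∀ j, 0 ≤ r j) (hrb : ∀ j, r j ≤ k * L / n)
    (hfeas : ∀ j, |ᾱ j - a j| ≤ Real.sqrt (r j))
    (hreg : ∀ j : ℕ, 1 ≤ j → j ≤ m →
      ∃ S : Finset (Fin m), S.card ≤ j ∧
        ∑ i ∈ Sᶜ, (ᾱ i) ^ 2 ≤ C ^ 2 * (j : ℝ) ^ (-(2 * β))) :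
    ∀ s : ℕ, 1 ≤ s → s ≤ m →
      ∑ j, (Real.sign (a j) * max (|a j| - Real.sqrt (r j)) 0 - ᾱ j) ^ 2 ≤
        C ^ 2 * (s : ℝ) ^ (-(2 * β)) + 4 * s * k * L / n := by
  intro s hs1 hs2
  obtain ⟨S, hcard, htail⟩ := hreg s hs1 hs2
  set f : Fin m → ℝ :=
    fun j => (Real.sign (a j) * max (|a j| - Real.sqrt (r j)) 0 - ᾱ j) ^ 2 with hf
  have hA : ∀ j, f j ≤ (ᾱ j) ^ 2 := by
    intro j
    have ht : (0:ℝ) ≤ Real.sqrt (r j) := Real.sqrt_nonneg _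
    have habs := abs_le.mp (hfeas j)
    simp only [hf]
    rcases lt_trichotomy (a j) 0 with h | h | h
    · rw [Real.sign_of_neg h, abs_of_neg h]
      rcases le_or_gt (-(a j) - Real.sqrt (r j)) 0 with h2 | h2
      · rw [max_eq_right h2]; nlinarith
      · rw [max_eq_left h2.le]; nlinarith
    · simp [h]
    · rw [Real.sign_of_pos h, abs_of_pos h]
      rcases le_or_gt (a j - Real.sqrt (r j)) 0 with h2 | h2
      · rw [max_eq_right h2]; nlinarith
      · rw [max_eq_left h2.le]; nlinarith
  have hB : ∀ j, f j ≤ 4 * (k * L / n) := by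
    intro j
    have ht : (0:ℝ) ≤ Real.sqrt (r j) := Real.sqrt_nonneg _
    have ht2 : Real.sqrt (r j) ^ 2 = r j := Real.sq_sqrt (hr0 j)
    have hrj : r j ≤ k * L / n := hrb j
    have habs := abs_le.mp (hfeas j)
    simp only [hf]
    rcases lt_trichotomy (a j) 0 with h | h | h
    · rw [Real.sign_of_neg h, abs_of_neg h]
      rcases le_or_gt (-(a j) - Real.sqrt (r j)) 0 with h2 | h2
      · rw [max_eq_right h2]; nlinarith
      · rw [max_eq_left h2.le]; nlinarith
    · simp only [h, Real.sign_zero, zero_mul, zero_sub]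
      nlinarith
    · rw [Real.sign_of_pos h, abs_of_pos h]
      rcases le_or_gt (a j - Real.sqrt (r j)) 0 with h2 | h2
      · rw [max_eq_right h2]; nlinarith
      · rw [max_eq_left h2.le]; nlinarith
  have hS : ∑ j ∈ S, f j ≤ (S.card : ℝ) * (4 * (k * L / n)) := by
    have := Finset.sum_le_card_nsmul S f (4 * (k * L / n)) (fun j _ => hB j)
    simpa [nsmul_eq_mul] using this
  have hSc : ∑ j ∈ Sᶜ, f j ≤ C ^ 2 * (s : ℝ) ^ (-(2 * β)) :=
    le_trans (Finset.sum_le_sum fun j _ => hA j) htail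
  have hsplit : ∑ j, f j = ∑ j ∈ S, f j + ∑ j ∈ Sᶜ, f j :=
    (Finset.sum_add_sum_compl S f).symm
  have hcard' : (S.card : ℝ) ≤ (s : ℝ) := by exact_mod_cast hcard
  have hpos : (0:ℝ) ≤ 4 * (k * L / n) := by positivity
  have hfin : (S.card : ℝ) * (4 * (k * L / n)) ≤ 4 * s * k * L / n := by
    have : (S.card : ℝ) * (4 * (k * L / n)) ≤ (s : ℝ) * (4 * (k * L / n)) :=
      mul_le_mul_of_nonneg_right hcard' hpos
    calc (S.card : ℝ) * (4 * (k * L / n)) ≤ (s : ℝ) * (4 * (k * L / n)) := this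
      _ = 4 * s * k * L / n := by ring
  rw [hsplit]
  linarith
end

section
/- Let M be a symmetric positive semidefinite m×m real matrix and define ⟨α, β⟩_M = αᵀMβ and the seminorm ‖α‖_M² = ⟨α, α⟩_M. Define ‖α‖_CS² = Σ_{j=1}^m ⟨α, e_j⟩_M² = ‖Mα‖², where e_j is the j-th standard basis vector. Suppose α̂ satisfies ⟨α̂, e_j⟩_M = sgn(a_j)(|a_j| − √(r_j))₊ for given a_j ∈ ℝ, r_j ≥ 0, and suppose ᾱ satisfies |⟨ᾱ, e_j⟩_M − a_j| ≤ √(r_j) for all j. Then for every S ⊆ {1,…,m}: ‖α̂ − ᾱ‖_CS² ≤ Σ_{j∉S} ⟨ᾱ, e_j⟩_M² + 4 Σ_{j∈S} r_j. -/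
open Matrix

lemma soft_key (a r x y : ℝ) (hr : 0 ≤ r)
    (hx : x = Real.sign a * max (|a| - Real.sqrt r) 0)
    (hy : |y - a| ≤ Real.sqrt r) : (x - y) ^ 2 ≤ 4 * r ∧ (x - y) ^ 2 ≤ y ^ 2 := by
  set s := Real.sqrt r with hs
  have hs0 : 0 ≤ s := Real.sqrt_nonneg r
  have hs2 : s ^ 2 = r := Real.sq_sqrt hr
  have hy1 : a - s ≤ y := by have := abs_le.mp hy; linarith [this.1]
  have hy2 : y ≤ a + s := by have := abs_le.mp hy; linarith [this.2]
  rcases le_or_gt (|a|) s with h | h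
  · have hx0 : x = 0 := by
      rw [hx, max_eq_right (by linarith)]; ring
    have ha := abs_le.mp h
    constructor <;> nlinarith [ha.1, ha.2]
  · have hmax : max (|a| - s) 0 = |a| - s := max_eq_left (by linarith)
    rcases lt_trichotomy a 0 with ha | ha | ha
    · have hsg : Real.sign a = -1 := Real.sign_of_neg ha
      have habs : |a| = -a := abs_of_neg ha
      have hx' : x = a + s := by rw [hx, hsg, hmax, habs]; ring
      have hneg : a + s < 0 := by rw [habs] at h; linarith
      constructor <;> nlinarith
    · exfalso; rw [ha, abs_zero] at h; linarith
    · have hsg : Real.sign a = 1 := Real.sign_of_pos ha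
      have habs : |a| = a := abs_of_pos ha
      have hx' : x = a - s := by rw [hx, hsg, hmax, habs]; ring
      have hpos : 0 < a - s := by rw [habs] at h; linarith
      constructor <;> nlinarith

/-- First oracle inequality for the Correlation Selector (Theorem 3.4), in the
CS-seminorm ‖γ‖_CS² = Σ_j ⟨γ,e_j⟩_M². -/
theorem stmt_8 {m : ℕ} (M : Matrix (Fin m) (Fin m) ℝ) (hM : M.PosSemidef)
    (a r : Fin m → ℝ) (hr : ∀ j, 0 ≤ r j) (αhat ᾱ : Fin m → ℝ)
    (hhat : ∀ j, αhat ⬝ᵥ M.mulVec (Pi.single j 1) =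
      Real.sign (a j) * max (|a j| - Real.sqrt (r j)) 0)
    (hbar : ∀ j, |ᾱ ⬝ᵥ M.mulVec (Pi.single j 1) - a j| ≤ Real.sqrt (r j))
    (S : Finset (Fin m)) :
    ∑ j, ((αhat - ᾱ) ⬝ᵥ M.mulVec (Pi.single j 1)) ^ 2 ≤
      ∑ j ∈ Sᶜ, (ᾱ ⬝ᵥ M.mulVec (Pi.single j 1)) ^ 2 + 4 * ∑ j ∈ S, r j := by
  have hkey : ∀ j, ((αhat - ᾱ) ⬝ᵥ M.mulVec (Pi.single j 1)) ^ 2 ≤ 4 * r j ∧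
      ((αhat - ᾱ) ⬝ᵥ M.mulVec (Pi.single j 1)) ^ 2 ≤
        (ᾱ ⬝ᵥ M.mulVec (Pi.single j 1)) ^ 2 := by
    intro j
    have hsub : (αhat - ᾱ) ⬝ᵥ M.mulVec (Pi.single j 1) =
        αhat ⬝ᵥ M.mulVec (Pi.single j 1) - ᾱ ⬝ᵥ M.mulVec (Pi.single j 1) :=
      sub_dotProduct _ _ _
    rw [hsub]
    exact soft_key (a j) (r j) _ _ (hr j) (hhat j) (hbar j)
  calc ∑ j, ((αhat - ᾱ) ⬝ᵥ M.mulVec (Pi.single j 1)) ^ 2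
      = ∑ j ∈ Sᶜ, ((αhat - ᾱ) ⬝ᵥ M.mulVec (Pi.single j 1)) ^ 2
        + ∑ j ∈ S, ((αhat - ᾱ) ⬝ᵥ M.mulVec (Pi.single j 1)) ^ 2 := by
        rw [Finset.sum_compl_add_sum]
    _ ≤ ∑ j ∈ Sᶜ, (ᾱ ⬝ᵥ M.mulVec (Pi.single j 1)) ^ 2 + ∑ j ∈ S, 4 * r j := by
        exact add_le_add (Finset.sum_le_sum fun j _ => (hkey j).2)
          (Finset.sum_le_sum fun j _ => (hkey j).1)
    _ = ∑ j ∈ Sᶜ, (ᾱ ⬝ᵥ M.mulVec (Pi.single j 1)) ^ 2 + 4 * ∑ j ∈ S, r j := by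
        rw [Finset.mul_sum]
end

section
/- Let ⟨·,·⟩_G be an inner product on ℝ^m (possibly degenerate: a PSD bilinear form), ã ∈ ℝ^m, r_j ≥ 0. If γ ∈ ℝ^m minimizes F(γ) = ‖γ‖_G² − 2 Σ_j γ_j ã_j + 2 Σ_j √(r_j) |γ_j|, then γ satisfies the constraints |⟨γ, e_j⟩_G − ã_j| ≤ √(r_j) for every j ∈ {1,…,m}. -/
/-!
Moving a minimizer `γ` by `t` along `e_j` raises the objective by at most
`2 t (⟨γ, e_j⟩_G - ãⱼ) + t² G_jj + 2 √rⱼ |t|`, so this quantity is nonnegative for every `t`.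
A function `a t + b t² + c |t|` that is nonnegative on all of `ℝ` has one-sided slopes
`c ± a ≥ 0` at the origin, i.e. `|a| ≤ c`.
-/

open Matrix Filter Topology

theorem abs_le_of_forall_mul_add_mul_sq_add_mul_abs_nonneg {a b c : ℝ}
    (h : ∀ t, 0 ≤ a * t + b * t ^ 2 + c * |t|) : |a| ≤ c := by
  have one_sided : ∀ a', (∀ t > 0, 0 ≤ a' * t + b * t ^ 2 + c * t) → -a' ≤ c := by
    intro a' h'
    have hlim : Tendsto (fun t : ℝ => a' + b * t + c) (𝓝[>] 0) (𝓝 (a' + b * 0 + c)) :=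
      (Continuous.tendsto (by fun_prop) 0).mono_left nhdsWithin_le_nhds
    have hnonneg : ∀ᶠ t in 𝓝[>] (0 : ℝ), 0 ≤ a' + b * t + c := by
      filter_upwards [self_mem_nhdsWithin] with t (ht : 0 < t)
      nlinarith [h' t ht]
    linarith [ge_of_tendsto hlim hnonneg]
  have hneg := one_sided a fun t ht => by simpa [abs_of_pos ht] using h t
  have hpos := one_sided (-a) fun t ht => by simpa [abs_of_pos ht] using h (-t)
  exact abs_le.mpr ⟨by linarith, by linarith⟩

theorem Matrix.IsSymm.add_smul_dotProduct_mulVec_add_smul {n R : Type*} [Fintype n]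
    [CommRing R] {M : Matrix n n R} (hM : M.IsSymm) (x v : n → R) (t : R) :
    (x + t • v) ⬝ᵥ M *ᵥ (x + t • v) =
      x ⬝ᵥ M *ᵥ x + 2 * t * (x ⬝ᵥ M *ᵥ v) + t ^ 2 * (v ⬝ᵥ M *ᵥ v) := by
  have hswap : v ⬝ᵥ M *ᵥ x = x ⬝ᵥ M *ᵥ v := by
    rw [dotProduct_mulVec, ← mulVec_transpose, hM.eq, dotProduct_comm]
  simp only [add_dotProduct, dotProduct_add, mulVec_add, mulVec_smul, smul_dotProduct,
    dotProduct_smul, smul_eq_mul, hswap]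
  ring

theorem sum_mul_abs_add_single_le {n : Type*} [Fintype n] [DecidableEq n] {w : n → ℝ}
    (hw : ∀ i, 0 ≤ w i) (x : n → ℝ) (j : n) (t : ℝ) :
    ∑ i, w i * |(x + Pi.single j t : n → ℝ) i| ≤ ∑ i, w i * |x i| + w j * |t| := by
  calc ∑ i, w i * |(x + Pi.single j t : n → ℝ) i|
      ≤ ∑ i, (w i * |x i| + w i * |(Pi.single j t : n → ℝ) i|) := by
        gcongr with i
        rw [← mul_add]
        exact mul_le_mul_of_nonneg_left (abs_add_le _ _) (hw i)
    _ = ∑ i, w i * |x i| + w j * |t| := by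
        rw [Finset.sum_add_distrib]
        congr 1
        rw [Fintype.sum_eq_single j fun i hi => by rw [Pi.single_eq_of_ne hi, abs_zero, mul_zero],
          Pi.single_eq_same]

section Lasso

variable {n : Type*} [Fintype n] [DecidableEq n]

def lassoObjective (M : Matrix n n ℝ) (a w x : n → ℝ) : ℝ :=
  x ⬝ᵥ M *ᵥ x - 2 * (x ⬝ᵥ a) + 2 * ∑ i, w i * |x i|

theorem lassoObjective_add_smul_single_le {M : Matrix n n ℝ} (hM : M.IsSymm) (a : n → ℝ)
    {w : n → ℝ} (hw : ∀ i, 0 ≤ w i) (x : n → ℝ) (j : n) (t : ℝ) :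
    lassoObjective M a w (x + t • Pi.single j 1) ≤
      lassoObjective M a w x + 2 * (x ⬝ᵥ M *ᵥ Pi.single j 1 - a j) * t +
        M j j * t ^ 2 + 2 * w j * |t| := by
  have hsingle : t • (Pi.single j 1 : n → ℝ) = Pi.single j t := by
    rw [← Pi.single_smul', smul_eq_mul, mul_one]
  have hdiag : Pi.single j 1 ⬝ᵥ M *ᵥ Pi.single j 1 = M j j := by
    simp [mulVec_single, single_dotProduct]
  rw [lassoObjective, lassoObjective, hM.add_smul_dotProduct_mulVec_add_smul, hdiag, hsingle,
    add_dotProduct, single_dotProduct]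
  linarith [sum_mul_abs_add_single_le hw x j t]

theorem abs_dotProduct_mulVec_single_sub_le_of_lassoObjective_le {M : Matrix n n ℝ}
    (hM : M.IsSymm) (a : n → ℝ) {w : n → ℝ} (hw : ∀ i, 0 ≤ w i) {x : n → ℝ}
    (hmin : ∀ y, lassoObjective M a w x ≤ lassoObjective M a w y) (j : n) :
    |x ⬝ᵥ M *ᵥ Pi.single j 1 - a j| ≤ w j := by
  have hfirst_order := abs_le_of_forall_mul_add_mul_sq_add_mul_abs_nonneg
      (a := 2 * (x ⬝ᵥ M *ᵥ Pi.single j 1 - a j)) (b := M j j) (c := 2 * w j) fun t => by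
    linarith [hmin (x + t • Pi.single j 1), lassoObjective_add_smul_single_le hM a hw x j t]
  rw [abs_mul, abs_two] at hfirst_order
  linarith

end Lasso

theorem stmt_11_general {m : ℕ} (M : Matrix (Fin m) (Fin m) ℝ) (hM : M.PosSemidef)
    (atil : Fin m → ℝ) (r : Fin m → ℝ)
    (γ : Fin m → ℝ)
    (hmin : ∀ γ' : Fin m → ℝ,
      γ ⬝ᵥ M.mulVec γ - 2 * ∑ j, γ j * atil j + 2 * ∑ j, Real.sqrt (r j) * |γ j| ≤
      γ' ⬝ᵥ M.mulVec γ' - 2 * ∑ j, γ' j * atil j + 2 * ∑ j, Real.sqrt (r j) * |γ' j|) :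
    ∀ j, |γ ⬝ᵥ M.mulVec (Pi.single j 1) - atil j| ≤ Real.sqrt (r j) :=
  abs_dotProduct_mulVec_single_sub_le_of_lassoObjective_le (isHermitian_iff_isSymm.mp hM.1)
    atil (fun j => Real.sqrt_nonneg (r j)) hmin

/-- Any minimizer of the penalized LASSO criterion satisfies the confidence-region
constraints (KKT direction of Proposition 3.1). -/
theorem stmt_11 {m : ℕ} (M : Matrix (Fin m) (Fin m) ℝ) (hM : M.PosSemidef)
    (atil : Fin m → ℝ) (r : Fin m → ℝ) (hr : ∀ j, 0 ≤ r j)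
    (γ : Fin m → ℝ)
    (hmin : ∀ γ' : Fin m → ℝ,
      γ ⬝ᵥ M.mulVec γ - 2 * ∑ j, γ j * atil j + 2 * ∑ j, Real.sqrt (r j) * |γ j| ≤
      γ' ⬝ᵥ M.mulVec γ' - 2 * ∑ j, γ' j * atil j + 2 * ∑ j, Real.sqrt (r j) * |γ' j|) :
    ∀ j, |γ ⬝ᵥ M.mulVec (Pi.single j 1) - atil j| ≤ Real.sqrt (r j) :=
  stmt_11_general M hM atil r γ hmin
end

section
/- Let ‖·‖_G be a seminorm induced by a PSD bilinear form on ℝ^m, and suppose all solutions α of the constrained program minimize ‖α‖_G² subject to |⟨α, e_j⟩_G − ã_j| ≤ √(r_j) for all j. Then any two solutions α, α' satisfy ‖α − ᾱ‖_G = ‖α' − ᾱ‖_G for every fixed ᾱ with ⟨ᾱ, e_j⟩_G in the same constraint set; in fact ⟨α, e_j⟩_G = ⟨α', e_j⟩_G for all j and ‖α‖_G = ‖α'‖_G, hence ‖α − ᾱ‖_G² = ‖α'− ᾱ‖_G² whenever ‖α − α'‖_G = 0. -/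
/-!
Two minimizers `α, α'` of the convex function `q β = βᵀMβ` over a convex feasible set have equal
value, and by the parallelogram law `q (α - α') = 2 q α + 2 q α' - 4 q ((α + α') / 2) ≤ 0`, the
midpoint being feasible. For PSD `M`, `q (α - α') = 0` forces `M (α - α') = 0`, so `α` and `α'`
are indistinguishable by the form: they have the same pairings with every `e_j` and the same risk
`q (α - ᾱ)` for every `ᾱ`.
-/

open Matrix

namespace Matrix

variable {n : Type*} [Fintype n]

theorem dotProduct_mulVec_add_add_sub {R : Type*} [CommRing R] (M : Matrix n n R) (x y : n → R) :
    (x + y) ⬝ᵥ M *ᵥ (x + y) + (x - y) ⬝ᵥ M *ᵥ (x - y) =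
      2 * (x ⬝ᵥ M *ᵥ x) + 2 * (y ⬝ᵥ M *ᵥ y) := by
  simp only [mulVec_add, mulVec_sub, add_dotProduct, sub_dotProduct, dotProduct_add,
    dotProduct_sub]
  ring

theorem convex_setOf_forall_abs_dotProduct_sub_le {ι : Type*} (v : ι → n → ℝ) (a s : ι → ℝ) :
    Convex ℝ {β : n → ℝ | ∀ j, |β ⬝ᵥ v j - a j| ≤ s j} := by
  have hS : {β : n → ℝ | ∀ j, |β ⬝ᵥ v j - a j| ≤ s j} =
      ⋂ j, (dotProductBilin ℝ ℝ).flip (v j) ⁻¹' Metric.closedBall (a j) (s j) := by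
    ext β
    simp [Real.dist_eq]
  rw [hS]
  exact convex_iInter fun j => (convex_closedBall _ _).linear_preimage _

namespace PosSemidef

variable {M : Matrix n n ℝ}

theorem dotProduct_mulVec_sub_eq_zero_of_isMinOn (hM : M.PosSemidef) {S : Set (n → ℝ)}
    (hS : Convex ℝ S) {x y : n → ℝ} (hx : x ∈ S) (hy : y ∈ S)
    (hxmin : IsMinOn (fun β => β ⬝ᵥ M *ᵥ β) S x) (hymin : IsMinOn (fun β => β ⬝ᵥ M *ᵥ β) S y) :
    (x - y) ⬝ᵥ M *ᵥ (x - y) = 0 := by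
  set z := (1 / 2 : ℝ) • x + (1 / 2 : ℝ) • y
  have hz : z ∈ S := hS hx hy (by norm_num) (by norm_num) (by norm_num)
  have hxz : x ⬝ᵥ M *ᵥ x ≤ z ⬝ᵥ M *ᵥ z := isMinOn_iff.1 hxmin z hz
  have hyz : y ⬝ᵥ M *ᵥ y ≤ z ⬝ᵥ M *ᵥ z := isMinOn_iff.1 hymin z hz
  have hsum : x + y = (2 : ℝ) • z := by
    simp only [z, smul_add, smul_smul]
    norm_num
  have hpar := dotProduct_mulVec_add_add_sub M x y
  rw [hsum, mulVec_smul, smul_dotProduct, dotProduct_smul] at hpar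
  have hnonneg : 0 ≤ (x - y) ⬝ᵥ M *ᵥ (x - y) := by
    simpa using hM.dotProduct_mulVec_nonneg (x - y)
  simp only [smul_eq_mul] at hpar
  linarith

theorem dotProduct_mulVec_eq_zero_of_self_eq_zero (hM : M.PosSemidef) {d : n → ℝ}
    (hd : d ⬝ᵥ M *ᵥ d = 0) (y : n → ℝ) : d ⬝ᵥ M *ᵥ y = 0 := by
  have hMd : M *ᵥ d = 0 := (hM.dotProduct_mulVec_zero_iff d).1 (by simpa using hd)
  have hMt : Mᵀ = M := isHermitian_iff_isSymm.1 hM.isHermitian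
  rw [dotProduct_mulVec, ← mulVec_transpose, hMt, hMd, zero_dotProduct]

theorem dotProduct_mulVec_add_eq_of_self_eq_zero (hM : M.PosSemidef) {d : n → ℝ}
    (hd : d ⬝ᵥ M *ᵥ d = 0) (u : n → ℝ) : (u + d) ⬝ᵥ M *ᵥ (u + d) = u ⬝ᵥ M *ᵥ u := by
  have hMd : M *ᵥ d = 0 := (hM.dotProduct_mulVec_zero_iff d).1 (by simpa using hd)
  rw [add_dotProduct, hM.dotProduct_mulVec_eq_zero_of_self_eq_zero hd, mulVec_add, hMd, add_zero,
    add_zero]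

end PosSemidef

end Matrix

theorem stmt_14_general {m : ℕ} (M : Matrix (Fin m) (Fin m) ℝ) (hM : M.PosSemidef)
    (atil r : Fin m → ℝ)
    (α α' : Fin m → ℝ)
    (hfeas : ∀ j, |α ⬝ᵥ M.mulVec (Pi.single j 1) - atil j| ≤ Real.sqrt (r j))
    (hfeas' : ∀ j, |α' ⬝ᵥ M.mulVec (Pi.single j 1) - atil j| ≤ Real.sqrt (r j))
    (hmin : ∀ β : Fin m → ℝ,
      (∀ j, |β ⬝ᵥ M.mulVec (Pi.single j 1) - atil j| ≤ Real.sqrt (r j)) →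
      α ⬝ᵥ M.mulVec α ≤ β ⬝ᵥ M.mulVec β)
    (hmin' : ∀ β : Fin m → ℝ,
      (∀ j, |β ⬝ᵥ M.mulVec (Pi.single j 1) - atil j| ≤ Real.sqrt (r j)) →
      α' ⬝ᵥ M.mulVec α' ≤ β ⬝ᵥ M.mulVec β) :
    (∀ j, α ⬝ᵥ M.mulVec (Pi.single j 1) = α' ⬝ᵥ M.mulVec (Pi.single j 1)) ∧
    α ⬝ᵥ M.mulVec α = α' ⬝ᵥ M.mulVec α' ∧
    (α - α') ⬝ᵥ M.mulVec (α - α') = 0 ∧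
    (∀ ᾱ : Fin m → ℝ,
      (α - ᾱ) ⬝ᵥ M.mulVec (α - ᾱ) = (α' - ᾱ) ⬝ᵥ M.mulVec (α' - ᾱ)) := by
  have hS := convex_setOf_forall_abs_dotProduct_sub_le (fun j => M *ᵥ Pi.single j 1) atil
    (fun j => Real.sqrt (r j))
  have hd : (α - α') ⬝ᵥ M *ᵥ (α - α') = 0 :=
    hM.dotProduct_mulVec_sub_eq_zero_of_isMinOn hS hfeas hfeas' (isMinOn_iff.2 hmin)
      (isMinOn_iff.2 hmin')
  refine ⟨fun j => ?_, le_antisymm (hmin α' hfeas') (hmin' α hfeas), hd, fun ᾱ => ?_⟩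
  · rw [← sub_eq_zero, ← sub_dotProduct]
    exact hM.dotProduct_mulVec_eq_zero_of_self_eq_zero hd _
  · rw [show α - ᾱ = (α' - ᾱ) + (α - α') by abel]
    exact hM.dotProduct_mulVec_add_eq_of_self_eq_zero hd _

/-- All solutions of the constrained program have the same G-"fingerprint" and the
same risk value ‖α − ᾱ‖_G² (uniqueness-of-risk claim of Proposition 3.1). -/
theorem stmt_14 {m : ℕ} (M : Matrix (Fin m) (Fin m) ℝ) (hM : M.PosSemidef)
    (atil r : Fin m → ℝ) (hr : ∀ j, 0 ≤ r j)
    (α α' : Fin m → ℝ)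
    (hfeas : ∀ j, |α ⬝ᵥ M.mulVec (Pi.single j 1) - atil j| ≤ Real.sqrt (r j))
    (hfeas' : ∀ j, |α' ⬝ᵥ M.mulVec (Pi.single j 1) - atil j| ≤ Real.sqrt (r j))
    (hmin : ∀ β : Fin m → ℝ,
      (∀ j, |β ⬝ᵥ M.mulVec (Pi.single j 1) - atil j| ≤ Real.sqrt (r j)) →
      α ⬝ᵥ M.mulVec α ≤ β ⬝ᵥ M.mulVec β)
    (hmin' : ∀ β : Fin m → ℝ,
      (∀ j, |β ⬝ᵥ M.mulVec (Pi.single j 1) - atil j| ≤ Real.sqrt (r j)) →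
      α' ⬝ᵥ M.mulVec α' ≤ β ⬝ᵥ M.mulVec β) :
    (∀ j, α ⬝ᵥ M.mulVec (Pi.single j 1) = α' ⬝ᵥ M.mulVec (Pi.single j 1)) ∧
    α ⬝ᵥ M.mulVec α = α' ⬝ᵥ M.mulVec α' ∧
    (α - α') ⬝ᵥ M.mulVec (α - α') = 0 ∧
    (∀ ᾱ : Fin m → ℝ,
      (α - ᾱ) ⬝ᵥ M.mulVec (α - ᾱ) = (α' - ᾱ) ⬝ᵥ M.mulVec (α' - ᾱ)) :=
  stmt_14_general M hM atil r α α' hfeas hfeas' hmin hmin'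
end
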